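/- (Strict version of Theorem 1, part 2.) Let E be a real inner product space, let a ∈ E with a ≠ 0 be the anchor embedding, let τ > 0, let n ≥ 2 and let z : Fin n → E be the negative-sample embeddings. For an index t, let F_t : E → ℝ be F_t(v) = log( exp(⟪a, v⟫/τ) + ∑_{j ≠ t} exp(⟪a, z j⟫/τ) ), and let G : E → ℝ be G(v) = -⟪a, v⟫/τ. Then the inequality between the positive-sample and negative-sample gradients is strict: for every t and every p ∈ E, ‖gradient G p‖ > ‖gradient F_t (z t)‖. (Equality in Theorem 1, part 2 would require the softmax coefficient exp(⟪a, z t⟫/τ) / ∑_{j=1}^{n} exp(⟪a, z j⟫/τ) to equal 1, which is impossible when there is more than one negative sample since every exponential is positive.) -/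

import Mathlib

/-!
Both losses depend on `v` only through `⟪a, v⟫`, so their gradients are multiples of `a`:
`-a / τ` for the positive sample and `σ • a / τ` for the `t`-th negative sample, where
`σ = exp (⟪a, z t⟫ / τ) / ∑ⱼ exp (⟪a, z j⟫ / τ)` is its softmax weight. With a second negative
sample the remaining exponentials contribute positive mass, so `σ < 1`.
-/

open Real Finset RealInnerProductSpace

theorem Finset.sum_erase_univ_pos {ι M : Type*} [Fintype ι] [DecidableEq ι]
    [AddCommMonoid M] [PartialOrder M] [IsOrderedCancelAddMonoid M]
    (hι : 1 < Fintype.card ι) {f : ι → M} (hf : ∀ i, 0 < f i) (t : ι) :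
    0 < ∑ i ∈ univ.erase t, f i :=
  sum_pos (fun i _ => hf i) <| by
    rw [← card_pos, card_erase_of_mem (mem_univ t), card_univ]; omega

theorem hasGradientAt_comp_inner {E : Type*} [NormedAddCommGroup E] [InnerProductSpace ℝ E]
    [CompleteSpace E] {h : ℝ → ℝ} {h' : ℝ} (a p : E) (hh : HasDerivAt h h' ⟪a, p⟫) :
    HasGradientAt (fun v : E => h ⟪a, v⟫) (h' • a) p := by
  rw [hasGradientAt_iff_hasFDerivAt]
  refine (hh.comp_hasFDerivAt p (innerSL ℝ a).hasFDerivAt).congr_fderiv ?_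
  ext v
  simp

theorem hasDerivAt_log_exp_div_add {C : ℝ} (hC : 0 ≤ C) (τ y : ℝ) :
    HasDerivAt (fun y => log (exp (y / τ) + C)) (exp (y / τ) / (exp (y / τ) + C) / τ) y := by
  convert (((hasDerivAt_id' y).div_const τ).exp.add_const C).log (by positivity) using 1
  ring

/-- Strict version of Theorem 1, part 2: with a nonzero anchor and at least two
negative samples, the norm of the gradient of the InfoNCE loss with respect to
the positive sample is strictly larger than the norm of the gradient with
respect to any negative sample. -/
theorem infoNCE_pos_gradient_norm_gt_neg
    {E : Type*} [NormedAddCommGroup E] [InnerProductSpace ℝ E] [CompleteSpace E]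
    (a : E) (ha : a ≠ 0) (τ : ℝ) (hτ : 0 < τ) (n : ℕ) (hn : 2 ≤ n) (z : Fin n → E) :
    ∀ (t : Fin n) (p : E),
      ‖gradient (fun v : E => -⟪a, v⟫ / τ) p‖ >
      ‖gradient
          (fun v : E => Real.log (Real.exp (⟪a, v⟫ / τ) +
            ∑ j ∈ Finset.univ.erase t, Real.exp (⟪a, z j⟫ / τ))) (z t)‖ := by
  intro t p
  set C := ∑ j ∈ univ.erase t, exp (⟪a, z j⟫ / τ)
  have hC : 0 < C := sum_erase_univ_pos (by simp; omega) (fun _ => exp_pos _) t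
  have hG := (hasGradientAt_comp_inner a p ((hasDerivAt_neg _).div_const τ)).gradient
  have hF := (hasGradientAt_comp_inner a (z t) (hasDerivAt_log_exp_div_add hC.le τ _)).gradient
  have hweight : exp (⟪a, z t⟫ / τ) / (exp (⟪a, z t⟫ / τ) + C) < 1 :=
    (div_lt_one (by positivity)).2 (by linarith)
  have ha' : 0 < ‖a‖ := norm_pos_iff.2 ha
  rw [hG, hF, norm_smul, norm_smul, neg_div, norm_neg, Real.norm_of_nonneg (by positivity),
    Real.norm_of_nonneg (by positivity)]
  gcongr
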